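/- For b ≥ 1, the generating function for (n,b)-domino stacks is H_b(x) = Σ_{n≥0} h_b(n) x^n = (x^b/(1−x^b)) · Σ_S Π_{j=1}^{m} (2(k_{j+1}−k_j)+1) x^{k_j}/(1−x^{k_j}), where the sum is over all subsets S ⊆ {1,...,b−1}, S is written in increasing order as {k_1 < ... < k_m}, and k_{m+1} = b. -/

import Mathlib

/-- `hFun b n` is the number of `(n,b)`-domino stacks, defined by the recurrence
`h_b(n) = Σ_{i=1}^{b} (2(b-i)+1) h_i(n-b)` with `h_b(b) = 1` and `h_b(n) = 0`
when `n < 1`, `b < 1`, or `n < b`. -/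
def hFun : ℕ → ℕ → ℕ
  | b, n =>
    if b = 0 ∨ n ≤ b then (if n = b ∧ 1 ≤ b then 1 else 0)
    else ∑ i ∈ Finset.Icc 1 b, (2 * (b - i) + 1) * hFun i (n - b)
termination_by b n => n
decreasing_by omega

/-- For `S` the ordered subset `{k_1 < k_2 < ⋯ < k_m}` with the convention `k_{m+1} = b`,
`nextIn b S k` is the successor of `k` in `S`, i.e. given `k = k_j` it returns `k_{j+1}`
(the least element of `S` greater than `k`, or `b` if there is none). -/
def nextIn (b : ℕ) (S : Finset ℕ) (k : ℕ) : ℕ :=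
  (insert b (S.filter (fun m => k < m))).min' (Finset.insert_nonempty _ _)

/-! Splitting off the `i = b` term of the recurrence, `H_b = x^b (1 + Σ_{i ≤ b} (2(b-i)+1) H_i)`
becomes `H_b (1 - x^b) = x^b (1 + Σ_{i < b} (2(b-i)+1) H_i)`. Writing `G_b` for the sum over
`S ⊆ {1, …, b-1}`, classifying `S` by its largest element `i` (whose successor is `b`, while the
successors inside `S \ {i} ⊆ {1, …, i-1}` are those computed relative to `i`) gives
`G_b = 1 + Σ_{i < b} (2(b-i)+1) x^i/(1-x^i) G_i`. So `H_b = x^b/(1-x^b) G_b` by strong induction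
on `b`. -/

open PowerSeries Finset

lemma hFun_of_lt {b n : ℕ} (h : n < b) : hFun b n = 0 := by
  rw [hFun, if_pos (Or.inr h.le), if_neg (by omega)]

lemma hFun_zero_right (b : ℕ) : hFun b 0 = 0 := by
  rw [hFun, if_pos (Or.inr b.zero_le), if_neg (by omega)]

lemma hFun_self {b : ℕ} (hb : 1 ≤ b) : hFun b b = 1 := by
  rw [hFun, if_pos (Or.inr le_rfl), if_pos ⟨rfl, hb⟩]

lemma hFun_of_lt_of_one_le {b n : ℕ} (hb : 1 ≤ b) (h : b < n) :
    hFun b n = ∑ i ∈ Icc 1 b, (2 * (b - i) + 1) * hFun i (n - b) := by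
  rw [hFun, if_neg (by omega)]

noncomputable def dominoStackGF (b : ℕ) : ℚ⟦X⟧ := mk fun n => (hFun b n : ℚ)

lemma dominoStackGF_eq_X_pow_mul (b : ℕ) (hb : 1 ≤ b) :
    dominoStackGF b =
      X ^ b * (1 + ∑ i ∈ Icc 1 b, ((2 * (b - i) + 1 : ℕ) : ℚ⟦X⟧) * dominoStackGF i) := by
  ext n
  simp only [coeff_X_pow_mul', map_add, map_sum, dominoStackGF, coeff_mk, coeff_one,
    ← map_natCast (C (R := ℚ)), coeff_C_mul]
  rcases lt_trichotomy n b with h | rfl | h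
  · simp [hFun_of_lt h, h.not_ge]
  · simp [hFun_self hb, hFun_zero_right]
  · simp [hFun_of_lt_of_one_le hb h, h.le, (Nat.sub_pos_of_lt h).ne']

lemma PowerSeries.eq_X_pow_mul_inv_mul_of_eq {k : Type*} [Field k] {f a : k⟦X⟧} {b : ℕ}
    (hb : b ≠ 0) (h : f = X ^ b * (f + a)) : f = X ^ b * (1 - X ^ b)⁻¹ * a := by
  have hc : constantCoeff (1 - X ^ b : k⟦X⟧) ≠ 0 := by simp [zero_pow hb]
  rw [mul_right_comm, eq_mul_inv_iff_mul_eq hc]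
  linear_combination h

lemma dominoStackGF_eq (b : ℕ) (hb : 1 ≤ b) :
    dominoStackGF b = X ^ b * (1 - X ^ b)⁻¹ *
      (1 + ∑ i ∈ Ico 1 b, ((2 * (b - i) + 1 : ℕ) : ℚ⟦X⟧) * dominoStackGF i) := by
  apply eq_X_pow_mul_inv_mul_of_eq (by omega)
  conv_lhs => rw [dominoStackGF_eq_X_pow_mul b hb, ← Ico_insert_right hb,
    sum_insert right_notMem_Ico, Nat.sub_self]
  push_cast
  ring

lemma Finset.sum_powerset_Ico_eq_add_sum_max {M : Type*} [AddCommMonoid M]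
    (f : Finset ℕ → M) (a b : ℕ) :
    ∑ S ∈ (Ico a b).powerset, f S =
      f ∅ + ∑ i ∈ Ico a b, ∑ T ∈ (Ico a i).powerset, f (insert i T) := by
  induction b with
  | zero => simp
  | succ b ih =>
    rcases le_or_gt a b with hab | hba
    · rw [Nat.Ico_succ_right_eq_insert_Ico hab, sum_powerset_insert right_notMem_Ico, ih,
        sum_insert right_notMem_Ico, add_assoc, add_comm (∑ T ∈ _, _)]
    · simp [Ico_eq_empty_of_le (Nat.succ_le_of_lt hba)]

lemma nextIn_insert_self {T : Finset ℕ} {i : ℕ} (b : ℕ) (hT : ∀ m ∈ T, m < i) :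
    nextIn b (insert i T) i = b := by
  have h : (insert i T).filter (i < ·) = ∅ :=
    filter_eq_empty_iff.mpr fun m hm => by
      rcases mem_insert.mp hm with rfl | hm
      · exact lt_irrefl m
      · exact (hT m hm).not_gt
  simp [nextIn, h]

lemma nextIn_insert_of_lt {T : Finset ℕ} {i k b : ℕ} (hki : k < i) (hib : i ≤ b) :
    nextIn b (insert i T) k = nextIn i T k := by
  simp only [nextIn, filter_insert, if_pos hki]
  rw [min'_insert b _ (insert_nonempty i _), min_eq_right]
  exact (min'_le _ _ (mem_insert_self _ _)).trans hib

noncomputable def stackWeight (b : ℕ) (S : Finset ℕ) : ℚ⟦X⟧ :=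
  ∏ k ∈ S, (((2 * (nextIn b S k - k) + 1 : ℕ) : ℚ⟦X⟧) * X ^ k * (1 - X ^ k)⁻¹)

lemma stackWeight_insert {T : Finset ℕ} {i b : ℕ} (hT : ∀ m ∈ T, m < i) (hib : i ≤ b) :
    stackWeight b (insert i T) =
      ((2 * (b - i) + 1 : ℕ) : ℚ⟦X⟧) * X ^ i * (1 - X ^ i)⁻¹ * stackWeight i T := by
  rw [stackWeight, prod_insert fun h => (hT i h).false, nextIn_insert_self b hT, stackWeight]
  congr 1
  exact prod_congr rfl fun k hk => by rw [nextIn_insert_of_lt (hT k hk) hib]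

noncomputable def stackWeightSum (b : ℕ) : ℚ⟦X⟧ :=
  ∑ S ∈ (Ico 1 b).powerset, stackWeight b S

lemma stackWeightSum_eq (b : ℕ) :
    stackWeightSum b = 1 + ∑ i ∈ Ico 1 b,
      ((2 * (b - i) + 1 : ℕ) : ℚ⟦X⟧) * (X ^ i * (1 - X ^ i)⁻¹ * stackWeightSum i) := by
  rw [stackWeightSum, sum_powerset_Ico_eq_add_sum_max]
  refine congr_arg₂ _ prod_empty (sum_congr rfl fun i hi => ?_)
  rw [stackWeightSum, mul_sum, mul_sum]
  refine sum_congr rfl fun T hT => ?_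
  rw [stackWeight_insert (fun m hm => (mem_Ico.mp (mem_powerset.mp hT hm)).2)
    (mem_Ico.mp hi).2.le]
  ring

lemma dominoStackGF_eq_mul_stackWeightSum (b : ℕ) (hb : 1 ≤ b) :
    dominoStackGF b = X ^ b * (1 - X ^ b)⁻¹ * stackWeightSum b := by
  induction b using Nat.strong_induction_on with
  | _ b ih =>
    rw [dominoStackGF_eq b hb, stackWeightSum_eq]
    congr 2
    exact sum_congr rfl fun i hi => by
      rw [ih i (mem_Ico.mp hi).2 (mem_Ico.mp hi).1]

open PowerSeries in
/-- For `b ≥ 1`, the generating function for `(n,b)`-domino stacks is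
`H_b(x) = (x^b/(1-x^b)) Σ_S Π_{j=1}^{m} (2(k_{j+1}-k_j)+1) x^{k_j}/(1-x^{k_j})`, the sum
being over all subsets `S = {k_1 < ⋯ < k_m} ⊆ {1,…,b-1}`, with `k_{m+1} = b`. -/
theorem domino_stack_genFun (b : ℕ) (hb : 1 ≤ b) :
    PowerSeries.mk (fun n => (hFun b n : ℚ)) =
      (X : PowerSeries ℚ) ^ b * (1 - (X : PowerSeries ℚ) ^ b)⁻¹ *
        ∑ S ∈ (Finset.Icc 1 (b - 1)).powerset, ∏ k ∈ S,
          (((2 * (nextIn b S k - k) + 1 : ℕ) : PowerSeries ℚ) *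
            (X : PowerSeries ℚ) ^ k * (1 - (X : PowerSeries ℚ) ^ k)⁻¹) := by
  rw [Icc_sub_one_right_eq_Ico_of_not_isMin (by simp; omega)]
  exact dominoStackGF_eq_mul_stackWeightSum b hb
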